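/- Let G = (N, Σ, P, S) be a left-regular grammar with no production rule of the form A → Sa such that L(G) ≠ Σ*, and let Φ_G := Φ₁ ∧ Φ₂ be the universal Horn sentence constructed from G. Then Models(Φ_G) does not have the amalgamation property, and the size of a smallest triple (A, B₁, B₂) of structures in Models(Φ_G) with embeddings e_i: A ↪ B_i that admits no amalgam in Models(Φ_G) is at least the length of a shortest nonempty word in Σ* \ L(G). -/

import Mathlib

open FirstOrder Language CategoryTheory

namespace AmalgamationHard

/-- An atomic formula `R(args)` over a relational language `L` with variables from `V`
(equality atoms are not permitted). -/
structure RelAtom (L : FirstOrder.Language.{0, 0}) (V : Type) where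
  n : ℕ
  R : L.Relations n
  args : Fin n → V

variable {L : FirstOrder.Language.{0, 0}}

/-- Realization of an atomic formula in a structure under an assignment of the variables. -/
def RelAtom.Realize {V M : Type} [L.Structure M] (a : RelAtom L V) (v : V → M) : Prop :=
  Structure.RelMap a.R (v ∘ a.args)

/-- A Horn clause: a finite conjunction of atoms (the premise) implying either an atom or
`⊥` (conclusion `none` codes `⊥`). -/
structure HornClause (L : FirstOrder.Language.{0, 0}) (V : Type) where
  prem : List (RelAtom L V)
  concl : Option (RelAtom L V)

/-- Realization of a Horn clause under an assignment. -/
def HornClause.Realize {V M : Type} [L.Structure M] (c : HornClause L V) (v : V → M) : Prop :=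
  (∀ a ∈ c.prem, a.Realize v) → c.concl.elim False (fun a => a.Realize v)

/-- A structure satisfies a universal Horn sentence (coded as a set of Horn clauses,
with all variables universally quantified) if every clause holds under every assignment. -/
def Satisfies (Φ : Set (HornClause L ℕ)) (M : Type) [L.Structure M] : Prop :=
  ∀ c ∈ Φ, ∀ v : ℕ → M, c.Realize v

/-- `Entails Φ prem concl` : the universal Horn sentence `Φ` semantically entails the
universally quantified Horn clause with premise `prem` and conclusion `concl`
(`none` codes `⊥`). -/
def Entails (Φ : Set (HornClause L ℕ)) {V : Type}
    (prem : List (RelAtom L V)) (concl : Option (RelAtom L V)) : Prop :=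
  ∀ (M : Type) [L.Structure M], Satisfies Φ M → ∀ v : V → M,
    (∀ a ∈ prem, a.Realize v) → concl.elim False (fun a => a.Realize v)


/-- `Models Φ`: the class of all finite models of the universal Horn sentence `Φ`. -/
def Models (Φ : Set (HornClause L ℕ)) : Set (Bundled L.Structure) :=
  { M | Finite M ∧ Satisfies Φ M }

/-- The amalgamation property for a class of structures. -/
def HasAP (K : Set (Bundled.{0} L.Structure)) : Prop :=
  ∀ (A B₁ B₂ : Bundled.{0} L.Structure) (e₁ : A ↪[L] B₁) (e₂ : A ↪[L] B₂),
    A ∈ K → B₁ ∈ K → B₂ ∈ K →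
      ∃ (C : Bundled.{0} L.Structure) (f₁ : B₁ ↪[L] C) (f₂ : B₂ ↪[L] C),
        C ∈ K ∧ f₁.comp e₁ = f₂.comp e₂

/-- A left-regular grammar with non-terminals `N`, terminals `A` and start symbol `start`;
`P1 X a` codes the production rule `X → a` and `P2 X B a` codes `X → Ba`. -/
structure LeftRegGrammar (N A : Type) where
  P1 : N → A → Prop
  P2 : N → N → A → Prop
  start : N

/-- `G.Derives X w` : the non-terminal `X` derives the (nonempty) terminal word `w`,
i.e. `X →*_G w`. -/
inductive LeftRegGrammar.Derives {N A : Type} (G : LeftRegGrammar N A) : N → List A → Prop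
  | base {X : N} {a : A} : G.P1 X a → G.Derives X [a]
  | step {X B : N} {a : A} {w : List A} :
      G.P2 X B a → G.Derives B w → G.Derives X (w ++ [a])

/-- The relation symbols of the combined signature `τ = τ₁ ∪ τ₂`: unary `I` and `T`,
binary `E` and `F`, a binary `R s` for every `s ∈ N ∪ Σ`, and a ternary `Q`.
All symbols have arity at most three. -/
inductive Sig3 (N A : Type) : ℕ → Type
  | I : Sig3 N A 1
  | T : Sig3 N A 1
  | E : Sig3 N A 2
  | F : Sig3 N A 2
  | R : (N ⊕ A) → Sig3 N A 2
  | Q : Sig3 N A 3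

/-- The combined relational signature. -/
def L3 (N A : Type) : FirstOrder.Language.{0, 0} :=
  ⟨fun _ => Empty, Sig3 N A⟩

variable {N A : Type}

def atomI (u : ℕ) : RelAtom (L3 N A) ℕ := ⟨1, Sig3.I, fun _ => u⟩
def atomT (u : ℕ) : RelAtom (L3 N A) ℕ := ⟨1, Sig3.T, fun _ => u⟩
def atomE (u v : ℕ) : RelAtom (L3 N A) ℕ := ⟨2, Sig3.E, ![u, v]⟩
def atomF (u v : ℕ) : RelAtom (L3 N A) ℕ := ⟨2, Sig3.F, ![u, v]⟩
def atomR (s : N ⊕ A) (u v : ℕ) : RelAtom (L3 N A) ℕ := ⟨2, Sig3.R s, ![u, v]⟩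
def atomQ (u v w : ℕ) : RelAtom (L3 N A) ℕ := ⟨3, Sig3.Q, ![u, v, w]⟩

/-- The universal Horn sentence `Φ₁` constructed from a left-regular grammar `G`
(formulated in the combined signature). Variables: `0` codes `y`, `1` and `2` code
consecutive variables. `C(y,x_i,x_{i+1})` is `E(y,x_i) ∧ E(y,x_{i+1})`. -/
def Phi1 (G : LeftRegGrammar N A) : Set (HornClause (L3 N A) ℕ) :=
  { c | (∃ X B a, G.P2 X B a ∧ X ≠ G.start ∧
          c = ⟨[atomI 0, atomE 0 1, atomE 0 2, atomR (Sum.inl B) 0 1, atomR (Sum.inr a) 1 2],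
                some (atomR (Sum.inl X) 0 2)⟩)
      ∨ (∃ B a, G.P2 G.start B a ∧
          c = ⟨[atomI 0, atomT 2, atomE 0 1, atomE 0 2, atomR (Sum.inl B) 0 1,
                atomR (Sum.inr a) 1 2], none⟩)
      ∨ (∃ X a, G.P1 X a ∧ X ≠ G.start ∧
          c = ⟨[atomI 0, atomE 0 1, atomR (Sum.inr a) 0 1], some (atomR (Sum.inl X) 0 1)⟩)
      ∨ (∃ a, G.P1 G.start a ∧
          c = ⟨[atomI 0, atomT 1, atomE 0 1, atomR (Sum.inr a) 0 1], none⟩) }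

/-- The universal Horn sentence `Φ₂` constructed from the alphabet `Σ` (formulated in
the combined signature). Variables: `0` codes `y₁`, `1` codes `y₂`, `2`, `3` code
consecutive `x`-variables. `P(…)` unfolds to the `F(y₁,·)`- and `E(y₂,·)`-atoms. -/
def Phi2 (N A : Type) : Set (HornClause (L3 N A) ℕ) :=
  { c | (∃ a : A,
          c = ⟨[atomI 1, atomR (Sum.inr a) 1 2, atomF 0 2, atomE 1 2], some (atomQ 0 1 2)⟩
        ∨ c = ⟨[atomI 1, atomQ 0 1 2, atomR (Sum.inr a) 2 3, atomF 0 2, atomF 0 3,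
                atomE 1 2, atomE 1 3], some (atomQ 0 1 3)⟩)
      ∨ c = ⟨[atomI 1, atomQ 0 1 2, atomT 2, atomF 0 2, atomE 1 2], none⟩ }

section Infra
variable {N A : Type}

lemma compg1 {α β : Type*} (g : α → β) (x : α) : g ∘ ![x] = ![g x] := by
  funext k; fin_cases k; rfl

lemma compg2 {α β : Type*} (g : α → β) (x y : α) : g ∘ ![x, y] = ![g x, g y] := by
  funext k; fin_cases k <;> rfl

lemma compg3 {α β : Type*} (g : α → β) (x y z : α) : g ∘ ![x, y, z] = ![g x, g y, g z] := by
  funext k; fin_cases k <;> rfl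

lemma compc1 {α β : Type*} (g : α → β) (x : α) : (g ∘ fun _ : Fin 1 => x) = ![g x] := by
  funext k; fin_cases k; rfl

/-- Convenient notation for `RelMap` over the signature `Sig3`. -/
def RM (N A : Type) {M : Type} [(L3 N A).Structure M] {n : ℕ} (r : Sig3 N A n)
    (t : Fin n → M) : Prop :=
  Structure.RelMap (L := L3 N A) (M := M) (r : (L3 N A).Relations n) t

local notation "RMa" => RM N A

variable {M : Type} [(L3 N A).Structure M] {G : LeftRegGrammar N A}

private def va3 (x0 x1 x2 : M) : ℕ → M := fun k => match k with
  | 0 => x0 | 1 => x1 | _ => x2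

private def va4 (x0 x1 x2 x3 : M) : ℕ → M := fun k => match k with
  | 0 => x0 | 1 => x1 | 2 => x2 | _ => x3

@[simp] private lemma va3_0 (x0 x1 x2 : M) : va3 x0 x1 x2 0 = x0 := rfl
@[simp] private lemma va3_1 (x0 x1 x2 : M) : va3 x0 x1 x2 1 = x1 := rfl
@[simp] private lemma va3_2 (x0 x1 x2 : M) : va3 x0 x1 x2 2 = x2 := rfl
@[simp] private lemma va4_0 (x0 x1 x2 x3 : M) : va4 x0 x1 x2 x3 0 = x0 := rfl
@[simp] private lemma va4_1 (x0 x1 x2 x3 : M) : va4 x0 x1 x2 x3 1 = x1 := rfl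
@[simp] private lemma va4_2 (x0 x1 x2 x3 : M) : va4 x0 x1 x2 x3 2 = x2 := rfl
@[simp] private lemma va4_3 (x0 x1 x2 x3 : M) : va4 x0 x1 x2 x3 3 = x3 := rfl

lemma modelE1 (hM : Satisfies (Phi1 G ∪ Phi2 N A) M) {X B a} (hp : G.P2 X B a)
    (hX : X ≠ G.start) {y x x' : M} (h1 : RMa Sig3.I ![y]) (h2 : RMa Sig3.E ![y, x])
    (h3 : RMa Sig3.E ![y, x']) (h4 : RMa (Sig3.R (Sum.inl B)) ![y, x])
    (h5 : RMa (Sig3.R (Sum.inr a)) ![x, x']) : RMa (Sig3.R (Sum.inl X)) ![y, x'] := by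
  have := hM _ (Or.inl (Or.inl ⟨X, B, a, hp, hX, rfl⟩)) (va3 y x x')
  simp only [HornClause.Realize, RelAtom.Realize, List.mem_cons, List.mem_singleton,
    List.not_mem_nil, atomI, atomE, atomT, atomR, atomQ, atomF, Option.elim,
    forall_eq_or_imp, forall_eq, compg2, compc1, compg3, va3_0, va3_1, va3_2,
    va4_0, va4_1, va4_2, va4_3, false_implies, implies_true, and_true, true_and,
    Matrix.cons_val_zero, Matrix.cons_val_one, Matrix.head_cons] at this
  exact this ⟨h1, h2, h3, h4, h5⟩

lemma modelE2 (hM : Satisfies (Phi1 G ∪ Phi2 N A) M) {B a} (hp : G.P2 G.start B a)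
    {y x x' : M} (h1 : RMa Sig3.I ![y]) (hT : RMa Sig3.T ![x']) (h2 : RMa Sig3.E ![y, x])
    (h3 : RMa Sig3.E ![y, x']) (h4 : RMa (Sig3.R (Sum.inl B)) ![y, x])
    (h5 : RMa (Sig3.R (Sum.inr a)) ![x, x']) : False := by
  have := hM _ (Or.inl (Or.inr (Or.inl ⟨B, a, hp, rfl⟩))) (va3 y x x')
  simp only [HornClause.Realize, RelAtom.Realize, List.mem_cons, List.mem_singleton,
    List.not_mem_nil, atomI, atomE, atomT, atomR, atomQ, atomF, Option.elim,
    forall_eq_or_imp, forall_eq, compg2, compc1, compg3, va3_0, va3_1, va3_2,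
    va4_0, va4_1, va4_2, va4_3, false_implies, implies_true, and_true, true_and,
    Matrix.cons_val_zero, Matrix.cons_val_one, Matrix.head_cons] at this
  exact this ⟨h1, hT, h2, h3, h4, h5⟩

lemma modelE3 (hM : Satisfies (Phi1 G ∪ Phi2 N A) M) {X a} (hp : G.P1 X a)
    (hX : X ≠ G.start) {y x : M} (h1 : RMa Sig3.I ![y]) (h2 : RMa Sig3.E ![y, x])
    (h3 : RMa (Sig3.R (Sum.inr a)) ![y, x]) : RMa (Sig3.R (Sum.inl X)) ![y, x] := by
  have := hM _ (Or.inl (Or.inr (Or.inr (Or.inl ⟨X, a, hp, hX, rfl⟩)))) (va3 y x x)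
  simp only [HornClause.Realize, RelAtom.Realize, List.mem_cons, List.mem_singleton,
    List.not_mem_nil, atomI, atomE, atomT, atomR, atomQ, atomF, Option.elim,
    forall_eq_or_imp, forall_eq, compg2, compc1, compg3, va3_0, va3_1, va3_2,
    va4_0, va4_1, va4_2, va4_3, false_implies, implies_true, and_true, true_and,
    Matrix.cons_val_zero, Matrix.cons_val_one, Matrix.head_cons] at this
  exact this ⟨h1, h2, h3⟩

lemma modelE4 (hM : Satisfies (Phi1 G ∪ Phi2 N A) M) {a} (hp : G.P1 G.start a)
    {y x : M} (h1 : RMa Sig3.I ![y]) (hT : RMa Sig3.T ![x]) (h2 : RMa Sig3.E ![y, x])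
    (h3 : RMa (Sig3.R (Sum.inr a)) ![y, x]) : False := by
  have := hM _ (Or.inl (Or.inr (Or.inr (Or.inr ⟨a, hp, rfl⟩)))) (va3 y x x)
  simp only [HornClause.Realize, RelAtom.Realize, List.mem_cons, List.mem_singleton,
    List.not_mem_nil, atomI, atomE, atomT, atomR, atomQ, atomF, Option.elim,
    forall_eq_or_imp, forall_eq, compg2, compc1, compg3, va3_0, va3_1, va3_2,
    va4_0, va4_1, va4_2, va4_3, false_implies, implies_true, and_true, true_and,
    Matrix.cons_val_zero, Matrix.cons_val_one, Matrix.head_cons] at this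
  exact this ⟨h1, hT, h2, h3⟩

lemma modelF1 (hM : Satisfies (Phi1 G ∪ Phi2 N A) M) (a : A)
    {u v x : M} (h1 : RMa Sig3.I ![v]) (h2 : RMa (Sig3.R (Sum.inr a)) ![v, x])
    (h3 : RMa Sig3.F ![u, x]) (h4 : RMa Sig3.E ![v, x]) : RMa Sig3.Q ![u, v, x] := by
  have := hM _ (Or.inr (Or.inl ⟨a, Or.inl rfl⟩)) (va3 u v x)
  simp only [HornClause.Realize, RelAtom.Realize, List.mem_cons, List.mem_singleton,
    List.not_mem_nil, atomI, atomE, atomT, atomR, atomQ, atomF, Option.elim,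
    forall_eq_or_imp, forall_eq, compg2, compc1, compg3, va3_0, va3_1, va3_2,
    va4_0, va4_1, va4_2, va4_3, false_implies, implies_true, and_true, true_and,
    Matrix.cons_val_zero, Matrix.cons_val_one, Matrix.head_cons] at this
  exact this ⟨h1, h2, h3, h4⟩

lemma modelF2 (hM : Satisfies (Phi1 G ∪ Phi2 N A) M) (a : A)
    {u v x x' : M} (h1 : RMa Sig3.I ![v]) (hQ : RMa Sig3.Q ![u, v, x])
    (h2 : RMa (Sig3.R (Sum.inr a)) ![x, x']) (h3 : RMa Sig3.F ![u, x])
    (h4 : RMa Sig3.F ![u, x']) (h5 : RMa Sig3.E ![v, x]) (h6 : RMa Sig3.E ![v, x']) :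
    RMa Sig3.Q ![u, v, x'] := by
  have := hM _ (Or.inr (Or.inl ⟨a, Or.inr rfl⟩)) (va4 u v x x')
  simp only [HornClause.Realize, RelAtom.Realize, List.mem_cons, List.mem_singleton,
    List.not_mem_nil, atomI, atomE, atomT, atomR, atomQ, atomF, Option.elim,
    forall_eq_or_imp, forall_eq, compg2, compc1, compg3, va3_0, va3_1, va3_2,
    va4_0, va4_1, va4_2, va4_3, false_implies, implies_true, and_true, true_and,
    Matrix.cons_val_zero, Matrix.cons_val_one, Matrix.head_cons] at this
  exact this ⟨h1, hQ, h2, h3, h4, h5, h6⟩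

lemma modelF3 (hM : Satisfies (Phi1 G ∪ Phi2 N A) M)
    {u v x : M} (h1 : RMa Sig3.I ![v]) (hQ : RMa Sig3.Q ![u, v, x])
    (hT : RMa Sig3.T ![x]) (h3 : RMa Sig3.F ![u, x]) (h4 : RMa Sig3.E ![v, x]) :
    False := by
  have := hM _ (Or.inr (Or.inr rfl)) (va3 u v x)
  simp only [HornClause.Realize, RelAtom.Realize, List.mem_cons, List.mem_singleton,
    List.not_mem_nil, atomI, atomE, atomT, atomR, atomQ, atomF, Option.elim,
    forall_eq_or_imp, forall_eq, compg2, compc1, compg3, va3_0, va3_1, va3_2,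
    va4_0, va4_1, va4_2, va4_3, false_implies, implies_true, and_true, true_and,
    Matrix.cons_val_zero, Matrix.cons_val_one, Matrix.head_cons] at this
  exact this ⟨h1, hQ, hT, h3, h4⟩

end Infra
/-- The data of an amalgamation triple. -/
structure Sup (N A : Type) where
  (B B₁ B₂ : Bundled.{0} (L3 N A).Structure)
  (e₁ : B ↪[L3 N A] B₁)
  (e₂ : B ↪[L3 N A] B₂)

namespace Sup

variable {N A : Type} (S : Sup N A)

/-- The carrier of the free amalgam. -/
def Car : Type := S.B₁ ⊕ {x : S.B₂ // x ∉ Set.range S.e₂}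

/-- The two "parts". -/
def Pt : Bool → Bundled.{0} (L3 N A).Structure := fun b => bif b then S.B₁ else S.B₂

def eP : (b : Bool) → (S.B ↪[L3 N A] S.Pt b)
  | true => S.e₁
  | false => S.e₂

open Classical in
noncomputable def j : (b : Bool) → S.Pt b → S.Car
  | true => Sum.inl
  | false => fun x =>
      if h : x ∈ Set.range S.e₂ then Sum.inl (S.e₁ h.choose) else Sum.inr ⟨x, h⟩

lemma j_inj (b : Bool) : Function.Injective (S.j b) := by
  cases b with
  | true => exact Sum.inl_injective
  | false =>
    intro x y hxy
    simp only [j] at hxy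
    by_cases h1 : x ∈ Set.range S.e₂ <;> by_cases h2 : y ∈ Set.range S.e₂
    · have hxy := (dif_pos h1).symm.trans (hxy.trans (dif_pos h2))
      have := S.e₁.injective (Sum.inl_injective hxy)
      rw [← h1.choose_spec, ← h2.choose_spec, this]
    · exact absurd ((dif_pos h1).symm.trans (hxy.trans (dif_neg h2))) Sum.inl_ne_inr
    · exact absurd ((dif_neg h1).symm.trans (hxy.trans (dif_pos h2))) Sum.inr_ne_inl
    · exact Subtype.mk_eq_mk.mp
        (Sum.inr_injective ((dif_neg h1).symm.trans (hxy.trans (dif_neg h2))))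

lemma j_comm (z : S.B) : S.j false (S.e₂ z) = S.j true (S.e₁ z) := by
  have h : S.e₂ z ∈ Set.range S.e₂ := ⟨z, rfl⟩
  have hc : h.choose = z := S.e₂.injective h.choose_spec
  simp only [j, dif_pos h, hc]
  exact dif_pos h

lemma inter {x : S.B₁} {y : S.B₂} (h : S.j true x = S.j false y) :
    ∃ z, S.e₁ z = x ∧ S.e₂ z = y := by
  by_cases hy : y ∈ Set.range S.e₂
  · refine ⟨hy.choose, ?_, hy.choose_spec⟩
    simp only [j] at h
    exact (Sum.inl_injective (h.trans (dif_pos hy))).symm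
  · simp only [j] at h
    exact absurd (h.trans (dif_neg hy)) Sum.inl_ne_inr

def inP (b : Bool) (c : S.Car) : Prop := c ∈ Set.range (S.j b)

lemma total (c : S.Car) : ∃ b, S.inP b c := by
  cases c with
  | inl x => exact ⟨true, x, rfl⟩
  | inr x => exact ⟨false, x.1, by simp [j]; exact dif_neg x.2⟩

/-- The relation `r` holds on `t` with a witness in part `b`. -/
def holds (b : Bool) {n : ℕ} (r : Sig3 N A n) (t : Fin n → S.Car) : Prop :=
  ∃ s : Fin n → S.Pt b,
    Structure.RelMap (L := L3 N A) (r : (L3 N A).Relations n) s ∧ S.j b ∘ s = t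

/-- The base relations of the free amalgam. -/
def baseRel {n : ℕ} (r : Sig3 N A n) (t : Fin n → S.Car) : Prop := ∃ b, S.holds b r t

lemma holds_inP {b : Bool} {n} {r : Sig3 N A n} {t} (h : S.holds b r t) (i : Fin n) :
    S.inP b (t i) := by
  obtain ⟨s, _, hs⟩ := h
  exact ⟨s i, congrFun hs i⟩

lemma holds_reflect {b : Bool} {n} {r : Sig3 N A n} {t} (h : S.holds b r t)
    {s : Fin n → S.Pt b} (hs : ∀ i, S.j b (s i) = t i) :
    Structure.RelMap (L := L3 N A) (r : (L3 N A).Relations n) s := by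
  obtain ⟨s', h', hs'⟩ := h
  have : s' = s := funext fun i => S.j_inj b ((congrFun hs' i).trans (hs i).symm)
  exact this ▸ h'

lemma holds_intro {b : Bool} {n} {r : Sig3 N A n} {s : Fin n → S.Pt b}
    (h : Structure.RelMap (L := L3 N A) (r : (L3 N A).Relations n) s) :
    S.holds b r (S.j b ∘ s) := ⟨s, h, rfl⟩

lemma transfer {b b' : Bool} {n} {r : Sig3 N A n} {t} (h : S.holds b r t)
    (h' : ∀ i, S.inP b' (t i)) : S.holds b' r t := by
  cases b with
  | true =>
    cases b' with
    | true => exact h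
    | false =>
      obtain ⟨s, hrel, hs⟩ := h
      choose y hy using h'
      have key : ∀ i, ∃ z, S.e₁ z = s i ∧ S.e₂ z = y i := fun i =>
        S.inter ((congrFun hs i).trans (hy i).symm)
      choose z hz1 hz2 using key
      have hs' : s = S.e₁ ∘ z := funext fun i => (hz1 i).symm
      rw [hs'] at hrel
      have hB : Structure.RelMap (L := L3 N A) (r : (L3 N A).Relations n) z :=
        (S.e₁.map_rel _ _).mp hrel
      refine ⟨S.e₂ ∘ z, (S.e₂.map_rel _ _).mpr hB, funext fun i => ?_⟩
      calc S.j false (S.e₂ (z i)) = S.j true (S.e₁ (z i)) := S.j_comm (z i)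
        _ = S.j true (s i) := by rw [hz1 i]
        _ = t i := congrFun hs i
  | false =>
    cases b' with
    | false => exact h
    | true =>
      obtain ⟨s, hrel, hs⟩ := h
      choose y hy using h'
      have key : ∀ i, ∃ z, S.e₁ z = y i ∧ S.e₂ z = s i := fun i =>
        S.inter ((hy i).trans (congrFun hs i).symm)
      choose z hz1 hz2 using key
      have hs' : s = S.e₂ ∘ z := funext fun i => (hz2 i).symm
      rw [hs'] at hrel
      have hB : Structure.RelMap (L := L3 N A) (r : (L3 N A).Relations n) z :=
        (S.e₂.map_rel _ _).mp hrel
      refine ⟨S.e₁ ∘ z, (S.e₁.map_rel _ _).mpr hB, funext fun i => ?_⟩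
      calc S.j true (S.e₁ (z i)) = S.j false (S.e₂ (z i)) := (S.j_comm (z i)).symm
        _ = S.j false (s i) := by rw [hz2 i]
        _ = t i := congrFun hs i

lemma pairP {r : Sig3 N A 2} {x y : S.Car} (h : S.baseRel r ![x, y]) :
    ∃ b, S.inP b x ∧ S.inP b y := by
  obtain ⟨b, hb⟩ := h
  exact ⟨b, S.holds_inP hb 0, S.holds_inP hb 1⟩

lemma triangle {x y z : S.Car} (h1 : ∃ b, S.inP b x ∧ S.inP b y)
    (h2 : ∃ b, S.inP b x ∧ S.inP b z) (h3 : ∃ b, S.inP b y ∧ S.inP b z) :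
    ∃ b, S.inP b x ∧ S.inP b y ∧ S.inP b z := by
  obtain ⟨b1, hx1, hy1⟩ := h1
  obtain ⟨b2, hx2, hz2⟩ := h2
  obtain ⟨b3, hy3, hz3⟩ := h3
  cases b1 <;> cases b2 <;> cases b3 <;>
    first
      | (refine ⟨true, ?_, ?_, ?_⟩ <;> assumption)
      | (refine ⟨false, ?_, ?_, ?_⟩ <;> assumption)

end Sup
namespace Sup

variable {N A : Type} {G : LeftRegGrammar N A} (S : Sup N A)

lemma satPt (h1 : Satisfies (Phi1 G ∪ Phi2 N A) S.B₁)
    (h2 : Satisfies (Phi1 G ∪ Phi2 N A) S.B₂) (b : Bool) :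
    Satisfies (Phi1 G ∪ Phi2 N A) (S.Pt b) := by
  cases b
  · exact h2
  · exact h1

section CLevel

variable (hs1 : Satisfies (Phi1 G ∪ Phi2 N A) S.B₁)
variable (hs2 : Satisfies (Phi1 G ∪ Phi2 N A) S.B₂)
variable (hG : ∀ X a, ¬ G.P2 X G.start a)

/-- Lift a triple of points in a common part with all relevant atoms to the part. -/
lemma liftPair {r : Sig3 N A 2} {b : Bool} {x y : S.Car} {sx sy : S.Pt b}
    (hx : S.j b sx = x) (hy : S.j b sy = y) (h : S.baseRel r ![x, y]) :
    Structure.RelMap (L := L3 N A) (r : (L3 N A).Relations 2) ![sx, sy] := by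
  obtain ⟨b0, h0⟩ := h
  refine S.holds_reflect (b := b) (S.transfer h0 fun i => ?_) (fun i => ?_)
  · fin_cases i
    · exact ⟨sx, hx⟩
    · exact ⟨sy, hy⟩
  · fin_cases i
    · exact hx
    · exact hy

lemma liftOne {r : Sig3 N A 1} {b : Bool} {x : S.Car} {sx : S.Pt b}
    (hx : S.j b sx = x) (h : S.baseRel r ![x]) :
    Structure.RelMap (L := L3 N A) (r : (L3 N A).Relations 1) ![sx] := by
  obtain ⟨b0, h0⟩ := h
  refine S.holds_reflect (b := b) (S.transfer h0 fun i => ?_) (fun i => ?_)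
  · fin_cases i; exact ⟨sx, hx⟩
  · fin_cases i; exact hx

lemma liftTriple {r : Sig3 N A 3} {b : Bool} {x y z : S.Car} {sx sy sz : S.Pt b}
    (hx : S.j b sx = x) (hy : S.j b sy = y) (hz : S.j b sz = z)
    (h : S.baseRel r ![x, y, z]) :
    Structure.RelMap (L := L3 N A) (r : (L3 N A).Relations 3) ![sx, sy, sz] := by
  obtain ⟨b0, h0⟩ := h
  refine S.holds_reflect (b := b) (S.transfer h0 fun i => ?_) (fun i => ?_)
  · fin_cases i
    · exact ⟨sx, hx⟩
    · exact ⟨sy, hy⟩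
    · exact ⟨sz, hz⟩
  · fin_cases i
    · exact hx
    · exact hy
    · exact hz

lemma basePair {r : Sig3 N A 2} {b : Bool} (sx sy : S.Pt b)
    (h : Structure.RelMap (L := L3 N A) (r : (L3 N A).Relations 2) ![sx, sy]) :
    S.baseRel r ![S.j b sx, S.j b sy] := by
  refine ⟨b, ![sx, sy], h, ?_⟩
  rw [compg2]

lemma baseTriple {r : Sig3 N A 3} {b : Bool} (sx sy sz : S.Pt b)
    (h : Structure.RelMap (L := L3 N A) (r : (L3 N A).Relations 3) ![sx, sy, sz]) :
    S.baseRel r ![S.j b sx, S.j b sy, S.j b sz] := by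
  refine ⟨b, ![sx, sy, sz], h, ?_⟩
  rw [compg3]

include hs1 hs2 in
lemma CE1 {X B' a} (hp : G.P2 X B' a) (hX : X ≠ G.start) {y x x' : S.Car}
    (h1 : S.baseRel Sig3.I ![y]) (h2 : S.baseRel Sig3.E ![y, x])
    (h3 : S.baseRel Sig3.E ![y, x']) (h4 : S.baseRel (Sig3.R (Sum.inl B')) ![y, x])
    (h5 : S.baseRel (Sig3.R (Sum.inr a)) ![x, x']) :
    S.baseRel (Sig3.R (Sum.inl X)) ![y, x'] := by
  obtain ⟨b, ⟨sy, hsy⟩, ⟨sx, hsx⟩, ⟨sx', hsx'⟩⟩ :=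
    S.triangle (S.pairP h2) (S.pairP h3) (S.pairP h5)
  have := modelE1 (S.satPt hs1 hs2 b) hp hX (S.liftOne hsy h1)
    (S.liftPair hsy hsx h2) (S.liftPair hsy hsx' h3) (S.liftPair hsy hsx h4)
    (S.liftPair hsx hsx' h5)
  have := S.basePair sy sx' this
  rwa [hsy, hsx'] at this

include hs1 hs2 in
lemma CE2 {B' a} (hp : G.P2 G.start B' a) {y x x' : S.Car}
    (h1 : S.baseRel Sig3.I ![y]) (hT : S.baseRel Sig3.T ![x'])
    (h2 : S.baseRel Sig3.E ![y, x]) (h3 : S.baseRel Sig3.E ![y, x'])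
    (h4 : S.baseRel (Sig3.R (Sum.inl B')) ![y, x])
    (h5 : S.baseRel (Sig3.R (Sum.inr a)) ![x, x']) : False := by
  obtain ⟨b, ⟨sy, hsy⟩, ⟨sx, hsx⟩, ⟨sx', hsx'⟩⟩ :=
    S.triangle (S.pairP h2) (S.pairP h3) (S.pairP h5)
  exact modelE2 (S.satPt hs1 hs2 b) hp (S.liftOne hsy h1) (S.liftOne hsx' hT)
    (S.liftPair hsy hsx h2) (S.liftPair hsy hsx' h3) (S.liftPair hsy hsx h4)
    (S.liftPair hsx hsx' h5)

include hs1 hs2 in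
lemma CE3 {X a} (hp : G.P1 X a) (hX : X ≠ G.start) {y x : S.Car}
    (h1 : S.baseRel Sig3.I ![y]) (h2 : S.baseRel Sig3.E ![y, x])
    (h3 : S.baseRel (Sig3.R (Sum.inr a)) ![y, x]) :
    S.baseRel (Sig3.R (Sum.inl X)) ![y, x] := by
  obtain ⟨b, ⟨sy, hsy⟩, ⟨sx, hsx⟩⟩ := S.pairP h2
  have := modelE3 (S.satPt hs1 hs2 b) hp hX (S.liftOne hsy h1)
    (S.liftPair hsy hsx h2) (S.liftPair hsy hsx h3)
  have := S.basePair sy sx this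
  rwa [hsy, hsx] at this

include hs1 hs2 in
lemma CE4 {a} (hp : G.P1 G.start a) {y x : S.Car}
    (h1 : S.baseRel Sig3.I ![y]) (hT : S.baseRel Sig3.T ![x])
    (h2 : S.baseRel Sig3.E ![y, x])
    (h3 : S.baseRel (Sig3.R (Sum.inr a)) ![y, x]) : False := by
  obtain ⟨b, ⟨sy, hsy⟩, ⟨sx, hsx⟩⟩ := S.pairP h2
  exact modelE4 (S.satPt hs1 hs2 b) hp (S.liftOne hsy h1) (S.liftOne hsx hT)
    (S.liftPair hsy hsx h2) (S.liftPair hsy hsx h3)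

end CLevel

end Sup
namespace Sup

variable {N A : Type}

/-- Derivation chains for the `Q`-closure of the free amalgam.  The list of nodes is kept
in reverse order (head = last node), as is the list of letters. -/
inductive Chain (S : Sup N A) (u v : S.Car) : List A → List S.Car → Prop
  | base {a x} : S.baseRel Sig3.I ![v] → S.baseRel (Sig3.R (Sum.inr a)) ![v, x] →
      S.baseRel Sig3.F ![u, x] → S.baseRel Sig3.E ![v, x] → Chain S u v [a] [x]
  | step {a x x' l xs} : Chain S u v l (x :: xs) →
      S.baseRel (Sig3.R (Sum.inr a)) ![x, x'] → S.baseRel Sig3.F ![u, x'] →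
      S.baseRel Sig3.E ![v, x'] → Chain S u v (a :: l) (x' :: x :: xs)

variable {G : LeftRegGrammar N A} (S : Sup N A)

lemma chain_head {u v l x xs} (h : Chain S u v l (x :: xs)) :
    S.baseRel Sig3.F ![u, x] ∧ S.baseRel Sig3.E ![v, x] := by
  cases h with
  | base h1 h2 h3 h4 => exact ⟨h3, h4⟩
  | step h h2 h3 h4 => exact ⟨h3, h4⟩

lemma chain_I {u v l xs} (h : Chain S u v l xs) : S.baseRel Sig3.I ![v] := by
  induction h with
  | base h1 _ _ _ => exact h1
  | step _ _ _ _ ih => exact ih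

lemma chain_len {u v l xs} (h : Chain S u v l xs) : l.length = xs.length := by
  induction h with
  | base _ _ _ _ => rfl
  | step _ _ _ _ ih => simpa using ih

lemma chain_ne_nil {u v l x xs} (h : Chain S u v l (x :: xs)) : l ≠ [] := by
  have := S.chain_len h
  intro hl
  rw [hl] at this
  simp at this

section CLevel2

variable (hs1 : Satisfies (Phi1 G ∪ Phi2 N A) S.B₁)
variable (hs2 : Satisfies (Phi1 G ∪ Phi2 N A) S.B₂)

include hs1 hs2 in
lemma CF2base {a : A} {u v x x' : S.Car} (h1 : S.baseRel Sig3.I ![v])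
    (hQ : S.baseRel Sig3.Q ![u, v, x]) (h2 : S.baseRel (Sig3.R (Sum.inr a)) ![x, x'])
    (h3 : S.baseRel Sig3.F ![u, x]) (h4 : S.baseRel Sig3.F ![u, x'])
    (h5 : S.baseRel Sig3.E ![v, x]) (h6 : S.baseRel Sig3.E ![v, x']) :
    S.baseRel Sig3.Q ![u, v, x'] := by
  obtain ⟨b0, hQ0⟩ := hQ
  have hu0 : S.inP b0 u := S.holds_inP hQ0 0
  have hv0 : S.inP b0 v := S.holds_inP hQ0 1
  have hx0 : S.inP b0 x := S.holds_inP hQ0 2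
  -- find a part containing all four points
  have key : ∃ b, S.inP b u ∧ S.inP b v ∧ S.inP b x ∧ S.inP b x' := by
    by_cases hx' : S.inP b0 x'
    · exact ⟨b0, hu0, hv0, hx0, hx'⟩
    · obtain ⟨b1, hb1⟩ := S.total x'
      have hb1ne : b1 ≠ b0 := fun e => hx' (e ▸ hb1)
      obtain ⟨b4, h4u, h4x'⟩ := S.pairP h4
      obtain ⟨b6, h6v, h6x'⟩ := S.pairP h6
      obtain ⟨b2, h2x, h2x'⟩ := S.pairP h2
      have e4 : b4 = b1 := by
        by_contra hne
        have : b4 = b0 := by revert hne hb1ne; cases b4 <;> cases b1 <;> cases b0 <;> simp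
        exact hx' (this ▸ h4x')
      have e6 : b6 = b1 := by
        by_contra hne
        have : b6 = b0 := by revert hne hb1ne; cases b6 <;> cases b1 <;> cases b0 <;> simp
        exact hx' (this ▸ h6x')
      have e2 : b2 = b1 := by
        by_contra hne
        have : b2 = b0 := by revert hne hb1ne; cases b2 <;> cases b1 <;> cases b0 <;> simp
        exact hx' (this ▸ h2x')
      exact ⟨b1, e4 ▸ h4u, e6 ▸ h6v, e2 ▸ h2x, hb1⟩
  obtain ⟨b, ⟨su, hsu⟩, ⟨sv, hsv⟩, ⟨sx, hsx⟩, ⟨sx', hsx'⟩⟩ := key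
  have := modelF2 (S.satPt hs1 hs2 b) a (S.liftOne hsv h1)
    (S.liftTriple hsu hsv hsx ⟨b0, hQ0⟩) (S.liftPair hsx hsx' h2)
    (S.liftPair hsu hsx h3) (S.liftPair hsu hsx' h4) (S.liftPair hsv hsx h5)
    (S.liftPair hsv hsx' h6)
  have := S.baseTriple su sv sx' this
  rwa [hsu, hsv, hsx'] at this

include hs1 hs2 in
lemma CF3base {u v x : S.Car} (h1 : S.baseRel Sig3.I ![v])
    (hQ : S.baseRel Sig3.Q ![u, v, x]) (hT : S.baseRel Sig3.T ![x])
    (h3 : S.baseRel Sig3.F ![u, x]) (h4 : S.baseRel Sig3.E ![v, x]) : False := by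
  obtain ⟨b, hQ0⟩ := hQ
  obtain ⟨su, hsu⟩ := S.holds_inP hQ0 0
  obtain ⟨sv, hsv⟩ := S.holds_inP hQ0 1
  obtain ⟨sx, hsx⟩ := S.holds_inP hQ0 2
  have hsu' : S.j b su = u := by simpa using hsu
  have hsv' : S.j b sv = v := by simpa using hsv
  have hsx' : S.j b sx = x := by simpa using hsx
  exact modelF3 (S.satPt hs1 hs2 b) (S.liftOne hsv' h1)
    (S.liftTriple hsu' hsv' hsx' ⟨b, hQ0⟩) (S.liftOne hsx' hT)
    (S.liftPair hsu' hsx' h3) (S.liftPair hsv' hsx' h4)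

include hs1 hs2 in
lemma chain_part {u v l ys} (h : Chain S u v l ys) :
    ∀ {x xs}, ys = x :: xs → ∀ b, S.inP b u → S.inP b v → S.inP b x →
      S.holds b Sig3.Q ![u, v, x] := by
  induction h with
  | @base a x0 h1 h2 h3 h4 =>
    rintro x xs ⟨rfl, rfl⟩ b hu hv hx
    obtain ⟨su, hsu⟩ := hu
    obtain ⟨sv, hsv⟩ := hv
    obtain ⟨sx, hsx⟩ := hx
    have := modelF1 (S.satPt hs1 hs2 b) a (S.liftOne hsv h1)
      (S.liftPair hsv hsx h2) (S.liftPair hsu hsx h3) (S.liftPair hsv hsx h4)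
    have h' := S.holds_intro (b := b) this
    rwa [compg3, hsu, hsv, hsx] at h'
  | @step a x0 x1 l0 xs0 hch h2 h3 h4 ih =>
    rintro x xs ⟨rfl, rfl⟩ b hu hv hx1
    obtain ⟨hF0, hE0⟩ := S.chain_head hch
    by_cases hx0 : S.inP b x0
    · have hQ := ih rfl b hu hv hx0
      obtain ⟨su, hsu⟩ := hu
      obtain ⟨sv, hsv⟩ := hv
      obtain ⟨sx0, hsx0⟩ := hx0
      obtain ⟨sx1, hsx1⟩ := hx1
      have := modelF2 (S.satPt hs1 hs2 b) a (S.liftOne hsv (S.chain_I hch))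
        (S.liftTriple hsu hsv hsx0 ⟨b, hQ⟩) (S.liftPair hsx0 hsx1 h2)
        (S.liftPair hsu hsx0 hF0) (S.liftPair hsu hsx1 h3)
        (S.liftPair hsv hsx0 hE0) (S.liftPair hsv hsx1 h4)
      have h' := S.holds_intro (b := b) this
      rwa [compg3, hsu, hsv, hsx1] at h'
    · -- x0 lies only in the other part; everything moves there
      obtain ⟨b1, hb1⟩ := S.total x0
      have hb1ne : b1 ≠ b := fun e => hx0 (e ▸ hb1)
      have moveTo : ∀ {c : S.Car} {b2 : Bool}, S.inP b2 x0 → S.inP b2 c → S.inP b1 c := by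
        intro c b2 hx hc
        have : b2 = b1 := by
          by_contra hne
          have : b2 = b := by revert hne hb1ne; cases b2 <;> cases b1 <;> cases b <;> simp
          exact hx0 (this ▸ hx)
        exact this ▸ hc
      obtain ⟨bF, hFu, hFx0⟩ := S.pairP hF0
      obtain ⟨bE, hEv, hEx0⟩ := S.pairP hE0
      obtain ⟨bR, hRx0, hRx1⟩ := S.pairP h2
      have hu1 : S.inP b1 u := moveTo hFx0 hFu
      have hv1 : S.inP b1 v := moveTo hEx0 hEv
      have hx11 : S.inP b1 x1 := moveTo hRx0 hRx1
      have hQ := ih rfl b1 hu1 hv1 hb1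
      obtain ⟨su, hsu⟩ := hu1
      obtain ⟨sv, hsv⟩ := hv1
      obtain ⟨sx0, hsx0⟩ := hb1
      obtain ⟨sx1, hsx1⟩ := hx11
      have := modelF2 (S.satPt hs1 hs2 b1) a (S.liftOne hsv (S.chain_I hch))
        (S.liftTriple hsu hsv hsx0 ⟨b1, hQ⟩) (S.liftPair hsx0 hsx1 h2)
        (S.liftPair hsu hsx0 hF0) (S.liftPair hsu hsx1 h3)
        (S.liftPair hsv hsx0 hE0) (S.liftPair hsv hsx1 h4)
      have h' := S.holds_intro (b := b1) this
      rw [compg3, hsu, hsv, hsx1] at h'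
      refine S.transfer h' fun i => ?_
      fin_cases i
      · exact hu
      · exact hv
      · exact hx1
end CLevel2

end Sup
namespace Sup

variable {N A : Type}

/-- The structure on the (closed) free amalgam. -/
def CStr (S : Sup N A) : (L3 N A).Structure S.Car where
  funMap := fun f _ => Empty.elim f
  RelMap := fun {n} r t =>
    match n, r, t with
    | _, Sig3.Q, t => S.baseRel Sig3.Q t ∨ ∃ l xs, Chain S (t 0) (t 1) l (t 2 :: xs)
    | _, r, t => S.baseRel r t

attribute [local instance] CStr

variable {G : LeftRegGrammar N A} (S : Sup N A)

lemma base_emb (b : Bool) {n} (r : Sig3 N A n) (s : Fin n → S.Pt b) :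
    S.baseRel r (S.j b ∘ s) ↔
      Structure.RelMap (L := L3 N A) (r : (L3 N A).Relations n) s := by
  constructor
  · rintro ⟨b0, h0⟩
    exact S.holds_reflect (S.transfer h0 fun i => ⟨s i, rfl⟩) fun i => rfl
  · intro h
    exact ⟨b, S.holds_intro h⟩

section Two

variable (hs1 : Satisfies (Phi1 G ∪ Phi2 N A) S.B₁)
variable (hs2 : Satisfies (Phi1 G ∪ Phi2 N A) S.B₂)

include hs1 hs2 in
lemma jb_emb (b : Bool) {n} (r : (L3 N A).Relations n) (s : Fin n → S.Pt b) :
    Structure.RelMap (M := S.Car) r (S.j b ∘ s) ↔ Structure.RelMap r s := by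
  cases r with
  | Q =>
    show (S.baseRel Sig3.Q _ ∨ _) ↔ _
    constructor
    · rintro (h | ⟨l, xs, hch⟩)
      · exact (S.base_emb b Sig3.Q s).mp h
      · have := S.chain_part hs1 hs2 hch rfl b ⟨s 0, rfl⟩ ⟨s 1, rfl⟩ ⟨s 2, rfl⟩
        have h' := S.holds_reflect this (s := ![s 0, s 1, s 2]) (fun i => by
          fin_cases i <;> rfl)
        have hse : s = ![s 0, s 1, s 2] := by
          funext i; fin_cases i <;> rfl
        rw [hse]
        exact h'
    · intro h
      exact Or.inl ((S.base_emb b Sig3.Q s).mpr h)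
  | I => exact S.base_emb b Sig3.I s
  | T => exact S.base_emb b Sig3.T s
  | E => exact S.base_emb b Sig3.E s
  | F => exact S.base_emb b Sig3.F s
  | R c => exact S.base_emb b (Sig3.R c) s

/-- The embedding of the part `b` into the free amalgam. -/
noncomputable def femb (b : Bool) : (S.Pt b : Type) ↪[L3 N A] S.Car where
  toFun := S.j b
  inj' := S.j_inj b
  map_fun' := fun f _ => Empty.elim f
  map_rel' := fun r s => S.jb_emb hs1 hs2 b r s

include hs1 hs2 in
lemma csat (hT : ¬ ∃ u v l x xs, Chain S u v l (x :: xs) ∧ S.baseRel Sig3.T ![x]) :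
    Satisfies (Phi1 G ∪ Phi2 N A) S.Car := by
  rintro c hc v
  rcases hc with h | h
  · rcases h with ⟨X, B', a, hp, hX, rfl⟩ | ⟨B', a, hp, rfl⟩ | ⟨X, a, hp, hX, rfl⟩ |
      ⟨a, hp, rfl⟩ <;>
    · simp only [HornClause.Realize, RelAtom.Realize, List.mem_cons, List.mem_singleton,
        List.not_mem_nil, atomI, atomE, atomT, atomR, atomQ, atomF, Option.elim,
        forall_eq_or_imp, forall_eq, compg2, compc1, compg3, false_implies, implies_true,
        and_true, true_and]
      first
      | exact fun ⟨h1, h2, h3, h4, h5⟩ => S.CE1 hs1 hs2 hp hX h1 h2 h3 h4 h5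
      | exact fun ⟨h1, hT', h2, h3, h4, h5⟩ => S.CE2 hs1 hs2 hp h1 hT' h2 h3 h4 h5
      | exact fun ⟨h1, h2, h3⟩ => S.CE3 hs1 hs2 hp hX h1 h2 h3
      | exact fun ⟨h1, hT', h2, h3⟩ => S.CE4 hs1 hs2 hp h1 hT' h2 h3
  · rcases h with ⟨a, rfl | rfl⟩ | rfl <;>
      simp only [HornClause.Realize, RelAtom.Realize, List.mem_cons, List.mem_singleton,
        List.not_mem_nil, atomI, atomE, atomT, atomR, atomQ, atomF, Option.elim,
        forall_eq_or_imp, forall_eq, compg2, compc1, compg3, false_implies, implies_true,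
        and_true, true_and]
    · exact fun ⟨h1, h2, h3, h4⟩ => Or.inr ⟨[a], [], Chain.base h1 h2 h3 h4⟩
    · rintro ⟨h1, hQ | ⟨l, xs, hch⟩, h2, h3, h4, h5, h6⟩
      · exact Or.inl (S.CF2base hs1 hs2 h1 hQ h2 h3 h4 h5 h6)
      · exact Or.inr ⟨a :: l, v 2 :: xs, Chain.step hch h2 h4 h6⟩
    · rintro ⟨h1, hQ | ⟨l, xs, hch⟩, hT', h3, h4⟩
      · exact S.CF3base hs1 hs2 h1 hQ hT' h3 h4
      · exact hT ⟨v 0, v 1, l, v 2, xs, hch, hT'⟩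

end Two

end Sup
lemma derives_ne_nil {N A : Type} {G : LeftRegGrammar N A} {X w}
    (h : G.Derives X w) : w ≠ [] := by
  induction h with
  | base _ => simp
  | step _ _ _ => simp

lemma derives_inv {N A : Type} {G : LeftRegGrammar N A} {X w}
    (h : G.Derives X w) :
    (∃ a, w = [a] ∧ G.P1 X a) ∨
      ∃ B' a w', w = w' ++ [a] ∧ G.P2 X B' a ∧ G.Derives B' w' := by
  cases h with
  | base hp => exact Or.inl ⟨_, rfl, hp⟩
  | step hp hd => exact Or.inr ⟨_, _, _, rfl, hp, hd⟩

lemma derives_singleton_inv {N A : Type} {G : LeftRegGrammar N A} {X a}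
    (h : G.Derives X [a]) : G.P1 X a := by
  rcases derives_inv h with ⟨a', he, hp⟩ | ⟨B', a', w', he, hp, hd⟩
  · obtain rfl : a = a' := List.singleton_inj.mp he
    exact hp
  · have hw' : w' = [] := by
      have hlen := congrArg List.length he
      simpa using hlen
    exact absurd hw' (derives_ne_nil hd)

lemma derives_concat_inv {N A : Type} {G : LeftRegGrammar N A} {X w a} (hw : w ≠ [])
    (h : G.Derives X (w ++ [a])) : ∃ B', G.P2 X B' a ∧ G.Derives B' w := by
  rcases derives_inv h with ⟨a', he, hp⟩ | ⟨B', a', w', he, hp, hd⟩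
  · exfalso
    have hlen : w = [] := by
      have := congrArg List.length he
      simpa using this
    exact hw hlen
  · have := List.append_inj' he rfl
    obtain ⟨rfl, ha⟩ := this
    have ha' : a' = a := by simpa using ha.symm
    exact ⟨B', ha' ▸ hp, hd⟩

namespace Sup

variable {N A : Type} {G : LeftRegGrammar N A} (S : Sup N A)

lemma chain_suffix {u v l xs} (h : Chain S u v l xs) :
    ∀ y ∈ xs, ∃ l' t', Chain S u v l' (y :: t') ∧ (y :: t') <:+ xs := by
  induction h with
  | @base a x h1 h2 h3 h4 =>
    intro y hy
    rcases List.mem_singleton.mp hy with rfl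
    exact ⟨[a], [], Chain.base h1 h2 h3 h4, List.suffix_rfl⟩
  | @step a x x' l xs hch h2 h3 h4 ih =>
    intro y hy
    rcases List.mem_cons.mp hy with rfl | hy
    · exact ⟨a :: l, x :: xs, Chain.step hch h2 h3 h4, List.suffix_rfl⟩
    · obtain ⟨l', t', hch', hsuf⟩ := ih y hy
      exact ⟨l', t', hch', hsuf.trans (List.suffix_cons x' _)⟩

lemma chain_nodup {u v l xs} (h : Chain S u v l xs) :
    ∃ l' x' t', Chain S u v l' (x' :: t') ∧ (x' :: t').Nodup ∧ xs.head? = some x' := by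
  induction h with
  | @base a x h1 h2 h3 h4 =>
    exact ⟨[a], x, [], Chain.base h1 h2 h3 h4, List.nodup_singleton x, rfl⟩
  | @step a x x' l xs hch h2 h3 h4 ih =>
    obtain ⟨l0, x0, t0, hch0, hnd0, hhd⟩ := ih
    have hx0 : x0 = x := by simpa using hhd.symm
    subst hx0
    by_cases hmem : x' ∈ x0 :: t0
    · obtain ⟨l', t', hch', hsuf⟩ := S.chain_suffix hch0 x' hmem
      exact ⟨l', x', t', hch', hsuf.sublist.nodup hnd0, rfl⟩
    · exact ⟨a :: l0, x', x0 :: t0, Chain.step hch0 h2 h3 h4,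
        List.nodup_cons.mpr ⟨hmem, hnd0⟩, rfl⟩

section NW

variable (hs1 : Satisfies (Phi1 G ∪ Phi2 N A) S.B₁)
variable (hs2 : Satisfies (Phi1 G ∪ Phi2 N A) S.B₂)
variable (hG : ∀ X a, ¬ G.P2 X G.start a)

include hs1 hs2 hG in
lemma chain_NT {u v l ys} (h : Chain S u v l ys) :
    ∀ {x xs}, ys = x :: xs → ∀ X, X ≠ G.start → G.Derives X l.reverse →
      S.baseRel (Sig3.R (Sum.inl X)) ![v, x] := by
  induction h with
  | @base a x0 h1 h2 h3 h4 =>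
    rintro x xs ⟨rfl, rfl⟩ X hX hd
    simp only [List.reverse_singleton] at hd
    exact S.CE3 hs1 hs2 (derives_singleton_inv hd) hX h1 h4 h2
  | @step a x0 x1 l0 xs0 hch h2 h3 h4 ih =>
    rintro x xs ⟨rfl, rfl⟩ X hX hd
    simp only [List.reverse_cons] at hd
    have hl0 : l0.reverse ≠ [] := fun e =>
      (S.chain_ne_nil hch) (List.reverse_eq_nil_iff.mp e)
    obtain ⟨B', hp, hd'⟩ := derives_concat_inv hl0 hd
    have hB' : B' ≠ G.start := fun e => hG X a (e ▸ hp)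
    have hR := ih rfl B' hB' hd'
    exact S.CE1 hs1 hs2 hp hX (S.chain_I hch) (S.chain_head hch).2 h4 hR h2

include hs1 hs2 hG in
lemma chain_NS {u v l x xs} (h : Chain S u v l (x :: xs))
    (hT : S.baseRel Sig3.T ![x]) : ¬ G.Derives G.start l.reverse := by
  intro hd
  cases h with
  | base h1 h2 h3 h4 =>
    simp only [List.reverse_singleton] at hd
    exact S.CE4 hs1 hs2 (derives_singleton_inv hd) h1 hT h4 h2
  | @step a x0 _ l0 xs0 hch h2 h3 h4 =>
    simp only [List.reverse_cons] at hd
    have hl0 : l0.reverse ≠ [] := fun e =>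
      (S.chain_ne_nil hch) (List.reverse_eq_nil_iff.mp e)
    obtain ⟨B', hp, hd'⟩ := derives_concat_inv hl0 hd
    have hB' : B' ≠ G.start := fun e => hG G.start a (e ▸ hp)
    have hR := S.chain_NT hs1 hs2 hG hch rfl B' hB' hd'
    exact S.CE2 hs1 hs2 hp (S.chain_I hch) hT (S.chain_head hch).2 h4 hR h2

end NW

end Sup
lemma list_to_fn {α : Type*} (w : List α) (h : w ≠ []) :
    ∃ (n : ℕ) (a : Fin (n + 1) → α), List.ofFn a = w ∧ n + 1 = w.length := by
  match w with
  | [] => exact absurd rfl h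
  | x :: t => exact ⟨t.length, (x :: t).get, List.ofFn_get _, rfl⟩

namespace Sup

attribute [local instance] CStr

variable {N A : Type} {G : LeftRegGrammar N A}

lemma no_amalgam_bound (hG : ∀ X a, ¬ G.P2 X G.start a) (S : Sup N A)
    (h1 : S.B₁ ∈ Models (Phi1 G ∪ Phi2 N A)) (h2 : S.B₂ ∈ Models (Phi1 G ∪ Phi2 N A))
    (hno : ¬ ∃ (C : Bundled.{0} (L3 N A).Structure)
        (f₁ : S.B₁ ↪[L3 N A] C) (f₂ : S.B₂ ↪[L3 N A] C),
        C ∈ Models (Phi1 G ∪ Phi2 N A) ∧ f₁.comp S.e₁ = f₂.comp S.e₂) :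
    ∃ (n : ℕ) (a : Fin (n + 1) → A), ¬ G.Derives G.start (List.ofFn a) ∧
      n + 1 ≤ Nat.card S.B₁ + Nat.card S.B₂ - Nat.card S.B := by
  obtain ⟨hf1, hs1⟩ := h1
  obtain ⟨hf2, hs2⟩ := h2
  haveI : Finite S.B₁ := hf1
  haveI : Finite S.B₂ := hf2
  haveI finC : Finite S.Car := by unfold Sup.Car; infer_instance
  by_cases hT : ∃ u v l x xs, Chain S u v l (x :: xs) ∧ S.baseRel Sig3.T ![x]
  · obtain ⟨u, v, l, x, xs, hch, hTx⟩ := hT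
    obtain ⟨l', x', t', hch', hnd, hhd⟩ := S.chain_nodup hch
    have hx' : x' = x := by simpa using hhd.symm
    subst hx'
    have hnotder := S.chain_NS hs1 hs2 hG hch' hTx
    have hwne : l'.reverse ≠ [] := by
      simpa using S.chain_ne_nil hch'
    obtain ⟨n, af, hofn, hlen⟩ := list_to_fn l'.reverse hwne
    refine ⟨n, af, by rwa [hofn], ?_⟩
    haveI := Fintype.ofFinite S.Car
    have hle : (x' :: t').length ≤ Fintype.card S.Car := hnd.length_le_card
    have hlen2 : l'.length = (x' :: t').length := S.chain_len hch'
    have hcardC : Nat.card S.Car = Nat.card S.B₁ + (Nat.card S.B₂ - Nat.card S.B) := by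
      have hsum : Nat.card S.Car =
          Nat.card S.B₁ + Nat.card {x : S.B₂ // x ∉ Set.range S.e₂} := by
        unfold Sup.Car
        exact Nat.card_sum
      have hsub : Nat.card {x : S.B₂ // x ∉ Set.range S.e₂} =
          Nat.card S.B₂ - Nat.card S.B := by
        have he : Nat.card {x : S.B₂ // x ∉ Set.range S.e₂} =
            Nat.card (↥(Set.range S.e₂)ᶜ) :=
          Nat.card_congr (Equiv.subtypeEquivRight fun x => Iff.rfl)
        have hc : (Set.range S.e₂).ncard + (Set.range S.e₂)ᶜ.ncard = Nat.card S.B₂ :=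
          Set.ncard_add_ncard_compl _
        have hr : (Set.range S.e₂).ncard = Nat.card S.B := by
          rw [← Nat.card_coe_set_eq]
          exact Nat.card_range_of_injective S.e₂.injective
        rw [he, Nat.card_coe_set_eq]
        omega
      omega
    have hcardfin : Nat.card S.Car = Fintype.card S.Car := Nat.card_eq_fintype_card
    have hBle : Nat.card S.B ≤ Nat.card S.B₂ :=
      Nat.card_le_card_of_injective _ S.e₂.injective
    have hrev : l'.reverse.length = l'.length := List.length_reverse
    simp only [List.length_cons] at hle hlen2
    omega
  · exfalso
    apply hno
    refine ⟨⟨S.Car, S.CStr⟩, S.femb hs1 hs2 true, S.femb hs1 hs2 false,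
      ⟨finC, S.csat hs1 hs2 hT⟩, ?_⟩
    apply FirstOrder.Language.Embedding.ext
    intro x
    exact (S.j_comm x).symm

end Sup
section Witness

variable {N A : Type} (G : LeftRegGrammar N A) (n : ℕ) (a : Fin (n + 1) → A)

/-- The base structure `B` of the counterexample triple: a chain of `R`-edges. -/
def strB : (L3 N A).Structure (Fin (n + 1)) where
  funMap := fun f _ => Empty.elim f
  RelMap := fun {m} r t =>
    match m, r, t with
    | _, Sig3.T, t => t 0 = Fin.last n
    | _, Sig3.R (Sum.inr b), t =>
        ∃ i : Fin n, t 0 = i.castSucc ∧ t 1 = i.succ ∧ b = a i.succ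
    | _, _, _ => False

/-- The structure `B₁`: the chain plus a point `y₁ = none` with `F`-edges. -/
def strB1 : (L3 N A).Structure (Option (Fin (n + 1))) where
  funMap := fun f _ => Empty.elim f
  RelMap := fun {m} r t =>
    match m, r, t with
    | _, Sig3.T, t => t 0 = some (Fin.last n)
    | _, Sig3.R (Sum.inr b), t =>
        ∃ i : Fin n, t 0 = some i.castSucc ∧ t 1 = some i.succ ∧ b = a i.succ
    | _, Sig3.F, t => t 0 = none ∧ t 1 ≠ none
    | _, _, _ => False

/-- The structure `B₂`: the chain plus a point `y₂ = none` with `I`, `E`- and `R`-edges,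
and the induced non-terminal relations. -/
def strB2 : (L3 N A).Structure (Option (Fin (n + 1))) where
  funMap := fun f _ => Empty.elim f
  RelMap := fun {m} r t =>
    match m, r, t with
    | _, Sig3.T, t => t 0 = some (Fin.last n)
    | _, Sig3.I, t => t 0 = none
    | _, Sig3.E, t => t 0 = none ∧ t 1 ≠ none
    | _, Sig3.R (Sum.inr b), t =>
        (∃ i : Fin n, t 0 = some i.castSucc ∧ t 1 = some i.succ ∧ b = a i.succ) ∨
          (t 0 = none ∧ t 1 = some 0 ∧ b = a 0)
    | _, Sig3.R (Sum.inl X), t => X ≠ G.start ∧ t 0 = none ∧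
        ∃ j : Fin (n + 1), t 1 = some j ∧ G.Derives X ((List.ofFn a).take (j.val + 1))
    | _, _, _ => False

lemma take_one_ofFn : (List.ofFn a).take 1 = [a 0] := by
  rw [List.ofFn_succ]
  rfl

lemma take_succ_ofFn (i : Fin n) :
    (List.ofFn a).take (i.val + 2) = (List.ofFn a).take (i.val + 1) ++ [a i.succ] := by
  have hlt : i.val + 1 < (List.ofFn a).length := by simp [i.isLt]
  have := List.take_succ (l := List.ofFn a) (i := i.val + 1)
  rw [this, List.getElem?_eq_getElem hlt]
  simp only [Option.toList_some, List.getElem_ofFn]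
  rfl

lemma take_full_ofFn : (List.ofFn a).take (n + 1) = List.ofFn a := by
  apply List.take_of_length_le
  simp

/-- Any structure with empty `I` satisfies `Φ`. -/
lemma sat_of_no_I {M : Type} [(L3 N A).Structure M] {G : LeftRegGrammar N A}
    (h : ∀ x : M, ¬ Structure.RelMap (L := L3 N A) (Sig3.I : (L3 N A).Relations 1) ![x]) :
    Satisfies (Phi1 G ∪ Phi2 N A) M := by
  rintro c hc v
  have key : ∀ (p : List (RelAtom (L3 N A) ℕ)) (cl : Option (RelAtom (L3 N A) ℕ)) (u : ℕ),
      c = ⟨atomI u :: p, cl⟩ → c.Realize v := by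
    rintro p cl u rfl
    intro hp
    exfalso
    have hI := hp _ List.mem_cons_self
    simp only [RelAtom.Realize, atomI, compc1] at hI
    exact h _ hI
  rcases hc with hh | hh
  · rcases hh with ⟨X, B', b, _, _, rfl⟩ | ⟨B', b, _, rfl⟩ | ⟨X, b, _, _, rfl⟩ | ⟨b, _, rfl⟩ <;>
      exact key _ _ _ rfl
  · rcases hh with ⟨b, rfl | rfl⟩ | rfl <;> exact key _ _ _ rfl

end Witness
section Witness2

variable {N A : Type} (G : LeftRegGrammar N A) (n : ℕ) (a : Fin (n + 1) → A)

lemma rm2_I (t : Fin 1 → Option (Fin (n + 1))) :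
    @Structure.RelMap (L3 N A) _ (strB2 G n a) 1 Sig3.I t ↔ t 0 = none := Iff.rfl

lemma rm2_T (t : Fin 1 → Option (Fin (n + 1))) :
    @Structure.RelMap (L3 N A) _ (strB2 G n a) 1 Sig3.T t ↔ t 0 = some (Fin.last n) :=
  Iff.rfl

lemma rm2_E (t : Fin 2 → Option (Fin (n + 1))) :
    @Structure.RelMap (L3 N A) _ (strB2 G n a) 2 Sig3.E t ↔ t 0 = none ∧ t 1 ≠ none :=
  Iff.rfl

lemma rm2_F (t : Fin 2 → Option (Fin (n + 1))) :
    @Structure.RelMap (L3 N A) _ (strB2 G n a) 2 Sig3.F t ↔ False := Iff.rfl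

lemma rm2_Q (t : Fin 3 → Option (Fin (n + 1))) :
    @Structure.RelMap (L3 N A) _ (strB2 G n a) 3 Sig3.Q t ↔ False := Iff.rfl

lemma rm2_Rr (b : A) (t : Fin 2 → Option (Fin (n + 1))) :
    @Structure.RelMap (L3 N A) _ (strB2 G n a) 2 (Sig3.R (Sum.inr b)) t ↔
      ((∃ i : Fin n, t 0 = some i.castSucc ∧ t 1 = some i.succ ∧ b = a i.succ) ∨
        (t 0 = none ∧ t 1 = some 0 ∧ b = a 0)) := Iff.rfl

lemma rm2_Rl (X : N) (t : Fin 2 → Option (Fin (n + 1))) :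
    @Structure.RelMap (L3 N A) _ (strB2 G n a) 2 (Sig3.R (Sum.inl X)) t ↔
      (X ≠ G.start ∧ t 0 = none ∧
        ∃ j : Fin (n + 1), t 1 = some j ∧
          G.Derives X ((List.ofFn a).take (j.val + 1))) := Iff.rfl

lemma satB2 (hw : ¬ G.Derives G.start (List.ofFn a)) :
    @Satisfies (L3 N A) (Phi1 G ∪ Phi2 N A) (Option (Fin (n + 1))) (strB2 G n a) := by
  rintro c hc v
  rcases hc with hh | hh
  · rcases hh with ⟨X, B', b, hp, hX, rfl⟩ | ⟨B', b, hp, rfl⟩ | ⟨X, b, hp, hX, rfl⟩ |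
      ⟨b, hp, rfl⟩ <;>
      simp only [HornClause.Realize, RelAtom.Realize, List.mem_cons, List.mem_singleton,
        List.not_mem_nil, atomI, atomE, atomT, atomR, atomQ, atomF, Option.elim,
        forall_eq_or_imp, forall_eq, compg2, compc1, compg3, false_implies, implies_true,
        and_true, true_and, Matrix.cons_val_zero, Matrix.cons_val_one, Matrix.head_cons,
        Matrix.cons_val_two, Matrix.tail_cons, rm2_I, rm2_T, rm2_E, rm2_F, rm2_Q, rm2_Rr,
        rm2_Rl]
    · -- A → B'b with A ≠ S
      rintro ⟨h0, ⟨-, h1ne⟩, ⟨-, h2ne⟩, ⟨hB'ne, -, j, hj, hder⟩, hR⟩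
      rcases hR with ⟨i, hi0, hi1, hib⟩ | ⟨hnone, -, -⟩
      · refine ⟨hX, h0, i.succ, hi1, ?_⟩
        have hj' : j = i.castSucc := by rw [hj] at hi0; exact Option.some_inj.mp hi0
        have hder' : G.Derives B' ((List.ofFn a).take (i.val + 1)) := by
          rw [hj'] at hder; simpa using hder
        have : (i.succ : Fin (n + 1)).val + 1 = i.val + 2 := by simp
        rw [this, take_succ_ofFn]
        exact hib ▸ LeftRegGrammar.Derives.step hp hder'
      · rw [hj] at hnone; exact absurd hnone (by simp)
    · -- S → B'b : bottom clause
      rintro ⟨h0, hT, ⟨-, h1ne⟩, ⟨-, h2ne⟩, ⟨hB'ne, -, j, hj, hder⟩, hR⟩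
      rcases hR with ⟨i, hi0, hi1, hib⟩ | ⟨hnone, -, -⟩
      · have hj' : j = i.castSucc := by rw [hj] at hi0; exact Option.some_inj.mp hi0
        have hlast : i.succ = Fin.last n := by
          rw [hi1] at hT; exact Option.some_inj.mp hT
        have hder' : G.Derives B' ((List.ofFn a).take (i.val + 1)) := by
          rw [hj'] at hder; simpa using hder
        have hfull : G.Derives G.start ((List.ofFn a).take (i.val + 2)) := by
          rw [take_succ_ofFn]
          exact hib ▸ LeftRegGrammar.Derives.step hp hder'
        have hiv : i.val + 2 = n + 1 := by
          have := congrArg Fin.val hlast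
          simp at this
          omega
        rw [hiv, take_full_ofFn] at hfull
        exact hw hfull
      · rw [hj] at hnone; exact absurd hnone (by simp)
    · -- A → b with A ≠ S
      rintro ⟨h0, ⟨-, h1ne⟩, hR⟩
      rcases hR with ⟨i, hi0, hi1, hib⟩ | ⟨-, h1, hb⟩
      · rw [h0] at hi0; exact absurd hi0.symm (by simp)
      · refine ⟨hX, h0, 0, h1, ?_⟩
        have : ((0 : Fin (n + 1)) : ℕ) + 1 = 1 := by simp
        rw [this, take_one_ofFn]
        exact hb ▸ LeftRegGrammar.Derives.base hp
    · -- S → b : bottom clause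
      rintro ⟨h0, hT, ⟨-, h1ne⟩, hR⟩
      rcases hR with ⟨i, hi0, hi1, hib⟩ | ⟨-, h1, hb⟩
      · rw [h0] at hi0; exact absurd hi0.symm (by simp)
      · have hlast : (0 : Fin (n + 1)) = Fin.last n := by
          rw [h1] at hT; exact Option.some_inj.mp hT
        have hn : n = 0 := by
          have := congrArg Fin.val hlast
          simpa using this.symm
        subst hn
        apply hw
        have : List.ofFn a = [a 0] := by
          rw [List.ofFn_succ]
          rfl
        rw [this]
        exact hb ▸ LeftRegGrammar.Derives.base hp
  · rcases hh with ⟨b, rfl | rfl⟩ | rfl <;>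
      simp only [HornClause.Realize, RelAtom.Realize, List.mem_cons, List.mem_singleton,
        List.not_mem_nil, atomI, atomE, atomT, atomR, atomQ, atomF, Option.elim,
        forall_eq_or_imp, forall_eq, compg2, compc1, compg3, false_implies, implies_true,
        and_true, true_and, Matrix.cons_val_zero, Matrix.cons_val_one, Matrix.head_cons,
        Matrix.cons_val_two, Matrix.tail_cons, rm2_I, rm2_T, rm2_E, rm2_F, rm2_Q, rm2_Rr,
        rm2_Rl]
    · rintro ⟨-, -, h, -⟩
      exact h
    · rintro ⟨-, h, -⟩
      exact h
    · rintro ⟨-, h, -⟩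
      exact h

end Witness2
section Witness3

variable {N A : Type} (G : LeftRegGrammar N A) (n : ℕ) (a : Fin (n + 1) → A)

/-- The three bundled structures. -/
def BB : Bundled.{0} (L3 N A).Structure := ⟨Fin (n + 1), strB n a⟩

def BB1 : Bundled.{0} (L3 N A).Structure := ⟨Option (Fin (n + 1)), strB1 n a⟩

def BB2 : Bundled.{0} (L3 N A).Structure := ⟨Option (Fin (n + 1)), strB2 G n a⟩

/-- The embedding of `B` into `B₁`. -/
def embB1 : BB (N := N) (A := A) n a ↪[L3 N A] BB1 (N := N) (A := A) n a where
  toFun := some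
  inj' := Option.some_injective _
  map_fun' := fun f _ => Empty.elim f
  map_rel' := by
    intro m r x
    cases r with
    | I => exact Iff.rfl
    | T =>
      show some (x 0) = some (Fin.last n) ↔ x 0 = Fin.last n
      exact Option.some_inj
    | E => exact Iff.rfl
    | F =>
      show (some (x 0) = none ∧ some (x 1) ≠ none) ↔ False
      simp
    | Q => exact Iff.rfl
    | R c =>
      cases c with
      | inl X => exact Iff.rfl
      | inr b =>
        show (∃ i : Fin n, some (x 0) = some i.castSucc ∧ some (x 1) = some i.succ ∧
            b = a i.succ) ↔ _
        exact exists_congr fun i => and_congr Option.some_inj (and_congr Option.some_inj Iff.rfl)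

/-- The embedding of `B` into `B₂`. -/
def embB2 : BB (N := N) (A := A) n a ↪[L3 N A] BB2 G n a where
  toFun := some
  inj' := Option.some_injective _
  map_fun' := fun f _ => Empty.elim f
  map_rel' := by
    intro m r x
    cases r with
    | I =>
      show some (x 0) = none ↔ False
      simp
    | T =>
      show some (x 0) = some (Fin.last n) ↔ x 0 = Fin.last n
      exact Option.some_inj
    | E =>
      show (some (x 0) = none ∧ some (x 1) ≠ none) ↔ False
      simp
    | F => exact Iff.rfl
    | Q => exact Iff.rfl
    | R c =>
      cases c with
      | inl X =>
        show (X ≠ G.start ∧ some (x 0) = none ∧ _) ↔ False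
        simp
      | inr b =>
        show ((∃ i : Fin n, some (x 0) = some i.castSucc ∧ some (x 1) = some i.succ ∧
            b = a i.succ) ∨ (some (x 0) = none ∧ some (x 1) = some (0 : Fin (n + 1)) ∧ b = a 0)) ↔ _
        refine Iff.trans (or_congr_left
          (exists_congr fun i => and_congr Option.some_inj (and_congr Option.some_inj Iff.rfl))) ?_
        have : ¬ (some (x 0) = none) := by simp
        constructor
        · rintro (h | ⟨h, -⟩)
          · exact h
          · exact absurd h this
        · exact Or.inl

include G in
lemma witness_noAP (hw : ¬ G.Derives G.start (List.ofFn a)) :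
    ¬ HasAP (Models (Phi1 G ∪ Phi2 N A)) := by
  intro hAP
  have mB : BB (N := N) (A := A) n a ∈ Models (Phi1 G ∪ Phi2 N A) :=
    ⟨(inferInstance : Finite (Fin (n + 1))), sat_of_no_I (fun _ h => h)⟩
  have mB1 : BB1 (N := N) (A := A) n a ∈ Models (Phi1 G ∪ Phi2 N A) :=
    ⟨(inferInstance : Finite (Option (Fin (n + 1)))), sat_of_no_I (fun _ h => h)⟩
  have mB2 : BB2 G n a ∈ Models (Phi1 G ∪ Phi2 N A) :=
    ⟨(inferInstance : Finite (Option (Fin (n + 1)))), satB2 G n a hw⟩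
  obtain ⟨C, f₁, f₂, ⟨hCfin, hC⟩, hcomm⟩ :=
    hAP _ _ _ (embB1 n a) (embB2 G n a) mB mB1 mB2
  -- elements of the amalgam
  set u : C := f₁ none with hu
  set v : C := f₂ none with hv
  set z : Fin (n + 1) → C := fun j => f₂ (some j) with hzdef
  have hz : ∀ j : Fin (n + 1), f₁ (some j) = z j := by
    intro j
    have := DFunLike.congr_fun hcomm j
    exact this
  have hI : RM N A Sig3.I ![v] := by
    have := (f₂.map_rel (Sig3.I : (L3 N A).Relations 1) ![none]).mpr rfl
    rwa [compg1 (⇑f₂) none] at this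
  have hE : ∀ j : Fin (n + 1), RM N A Sig3.E ![v, z j] := by
    intro j
    have := (f₂.map_rel (Sig3.E : (L3 N A).Relations 2) ![none, some j]).mpr
      ⟨rfl, by simp⟩
    rwa [compg2 (⇑f₂) none (some j)] at this
  have hF : ∀ j : Fin (n + 1), RM N A Sig3.F ![u, z j] := by
    intro j
    have := (f₁.map_rel (Sig3.F : (L3 N A).Relations 2) ![none, some j]).mpr
      ⟨rfl, by simp⟩
    rwa [compg2 (⇑f₁) none (some j), hz j] at this
  have hR0 : RM N A (Sig3.R (Sum.inr (a 0))) ![v, z 0] := by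
    have := (f₂.map_rel ((Sig3.R (Sum.inr (a 0))) : (L3 N A).Relations 2)
      ![none, some 0]).mpr (Or.inr ⟨rfl, rfl, rfl⟩)
    rwa [compg2 (⇑f₂) none (some 0)] at this
  have hRs : ∀ i : Fin n, RM N A (Sig3.R (Sum.inr (a i.succ))) ![z i.castSucc, z i.succ] := by
    intro i
    have := (f₂.map_rel ((Sig3.R (Sum.inr (a i.succ))) : (L3 N A).Relations 2)
      ![some i.castSucc, some i.succ]).mpr (Or.inl ⟨i, rfl, rfl, rfl⟩)
    rwa [compg2 (⇑f₂) (some i.castSucc) (some i.succ)] at this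
  have hT : RM N A Sig3.T ![z (Fin.last n)] := by
    have := (f₂.map_rel (Sig3.T : (L3 N A).Relations 1) ![some (Fin.last n)]).mpr rfl
    rwa [compg1 (⇑f₂) (some (Fin.last n))] at this
  have hQ : ∀ j : Fin (n + 1), RM N A Sig3.Q ![u, v, z j] := by
    intro j
    induction j using Fin.induction with
    | zero => exact modelF1 hC (a 0) hI hR0 (hF 0) (hE 0)
    | succ i ih =>
      exact modelF2 hC (a i.succ) hI ih (hRs i) (hF i.castSucc) (hF i.succ)
        (hE i.castSucc) (hE i.succ)
  exact modelF3 hC hI (hQ (Fin.last n)) hT (hF (Fin.last n)) (hE (Fin.last n))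

end Witness3
/-- If `L(G) ≠ Σ*`, then `Models (Φ₁ ∧ Φ₂)` does not have the amalgamation property, and
every triple of finite models with embeddings admitting no amalgam has size (the number of
elements of `B₁ ∪ B₂` after identifying the two copies of `A`, i.e. `|B₁| + |B₂| - |A|`)
at least the length of some nonempty word not generated by `G`; hence, the size of a
smallest such triple is at least the length of a shortest nonempty word in `Σ* \ L(G)`. -/
theorem no_ap_with_lower_bound [Finite N] [Finite A]
    (G : LeftRegGrammar N A) (hG : ∀ X a, ¬ G.P2 X G.start a)
    (hL : ∃ (n : ℕ) (a : Fin (n + 1) → A), ¬ G.Derives G.start (List.ofFn a)) :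
    ¬ HasAP (Models (Phi1 G ∪ Phi2 N A)) ∧
    ∀ (B B₁ B₂ : Bundled.{0} (L3 N A).Structure)
      (e₁ : B ↪[L3 N A] B₁) (e₂ : B ↪[L3 N A] B₂),
      B ∈ Models (Phi1 G ∪ Phi2 N A) → B₁ ∈ Models (Phi1 G ∪ Phi2 N A) →
      B₂ ∈ Models (Phi1 G ∪ Phi2 N A) →
      (¬ ∃ (C : Bundled.{0} (L3 N A).Structure)
          (f₁ : B₁ ↪[L3 N A] C) (f₂ : B₂ ↪[L3 N A] C),
          C ∈ Models (Phi1 G ∪ Phi2 N A) ∧ f₁.comp e₁ = f₂.comp e₂) →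
      ∃ (n : ℕ) (a : Fin (n + 1) → A), ¬ G.Derives G.start (List.ofFn a) ∧
        n + 1 ≤ Nat.card B₁ + Nat.card B₂ - Nat.card B := by
  obtain ⟨n, a, hw⟩ := hL
  constructor
  · exact witness_noAP G n a hw
  · intro B B₁ B₂ e₁ e₂ hB hB₁ hB₂ hno
    exact Sup.no_amalgam_bound hG ⟨B, B₁, B₂, e₁, e₂⟩ hB₁ hB₂ hno

end AmalgamationHard
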